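/- arXiv:1810.08287 — 6 statements merged into one kernel-verified Lean document; each statement's English description precedes it below -/
import Mathlib

section
/- For every fixed τ > 0, the function f_τ(λ) = cos(τλ)/(2λ(1 − sin(τλ))) is strictly convex on the open interval (0, π/(2τ)). -/
/-!
Since `f_τ(λ) = τ · f_1(τλ)`, it suffices to treat `τ = 1` on `(0, π/2)`. There
`cos t / (1 - sin t) = (1 + sin t) / cos t`, so `f_1(t) = (1 + sin t) / (2 t cos t)`, whose second
derivative `(1 + sin t)(t² sin t + (t - cos t)² + cos² t) / (2 t³ cos³ t)` is manifestly positive.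
-/

open Real Set

theorem StrictConvexOn.const_mul {s : Set ℝ} {f : ℝ → ℝ} (hf : StrictConvexOn ℝ s f) {c : ℝ}
    (hc : 0 < c) : StrictConvexOn ℝ s fun x => c * f x := by
  refine ⟨hf.1, fun x hx y hy hxy a b ha hb hab => ?_⟩
  simpa only [smul_eq_mul, mul_add, mul_left_comm c] using
    mul_lt_mul_of_pos_left (hf.2 hx hy hxy ha hb hab) hc

theorem StrictConvexOn.comp_const_mul {s : Set ℝ} {f : ℝ → ℝ} (hf : StrictConvexOn ℝ s f)
    {c : ℝ} (hc : c ≠ 0) : StrictConvexOn ℝ ((c * ·) ⁻¹' s) fun x => f (c * x) := by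
  refine ⟨hf.1.linear_preimage (LinearMap.mulLeft ℝ c), fun x hx y hy hxy a b ha hb hab => ?_⟩
  simpa only [smul_eq_mul, mul_add, mul_left_comm c] using
    hf.2 hx hy (by simpa [hc] using hxy) ha hb hab

theorem strictConvexOn_of_hasDerivAt2_pos {D : Set ℝ} (hD : Convex ℝ D) (hD' : IsOpen D)
    {f f' f'' : ℝ → ℝ} (hf : ∀ x ∈ D, HasDerivAt f (f' x) x)
    (hf' : ∀ x ∈ D, HasDerivAt f' (f'' x) x) (hf'' : ∀ x ∈ D, 0 < f'' x) :
    StrictConvexOn ℝ D f := by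
  have hmono : StrictMonoOn f' D :=
    strictMonoOn_of_hasDerivWithinAt_pos hD
      (fun x hx => (hf' x hx).continuousAt.continuousWithinAt)
      (fun x hx => (hf' x (interior_subset hx)).hasDerivWithinAt)
      (fun x hx => hf'' x (interior_subset hx))
  refine StrictMonoOn.strictConvexOn_of_deriv hD
    (fun x hx => (hf x hx).continuousAt.continuousWithinAt) ?_
  rw [hD'.interior_eq]
  exact hmono.congr fun x hx => (hf x hx).deriv.symm

theorem cos_div_one_sub_sin {x : ℝ} (hx : cos x ≠ 0) :
    cos x / (1 - sin x) = (1 + sin x) / cos x := by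
  have hs : 1 - sin x ≠ 0 := by
    intro h
    apply hx
    nlinarith [sin_sq_add_cos_sq x]
  rw [div_eq_div_iff hs hx]
  linear_combination sin_sq_add_cos_sq x

theorem hasDerivAt_one_add_sin_div_mul_cos {x : ℝ} (hx : x ≠ 0) (hc : cos x ≠ 0) :
    HasDerivAt (fun t => (1 + sin t) / (2 * t * cos t))
      ((1 + sin x) * (x - cos x) / (2 * x ^ 2 * cos x ^ 2)) x := by
  have hden : HasDerivAt (fun t => 2 * t * cos t) _ x :=
    ((hasDerivAt_id' x).const_mul 2).mul (hasDerivAt_cos x)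
  refine (((hasDerivAt_sin x).const_add 1).div hden (by positivity)).congr_deriv ?_
  field_simp
  linear_combination x * sin_sq_add_cos_sq x

theorem hasDerivAt_one_add_sin_mul_sub_cos_div {x : ℝ} (hx : x ≠ 0) (hc : cos x ≠ 0) :
    HasDerivAt (fun t => (1 + sin t) * (t - cos t) / (2 * t ^ 2 * cos t ^ 2))
      ((1 + sin x) * (x ^ 2 * sin x + (x - cos x) ^ 2 + cos x ^ 2) / (2 * x ^ 3 * cos x ^ 3))
      x := by
  have hnum : HasDerivAt (fun t => (1 + sin t) * (t - cos t)) _ x :=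
    ((hasDerivAt_sin x).const_add 1).mul ((hasDerivAt_id' x).sub (hasDerivAt_cos x))
  have hden : HasDerivAt (fun t => 2 * t ^ 2 * cos t ^ 2) _ x :=
    ((hasDerivAt_pow 2 x).const_mul 2).mul ((hasDerivAt_cos x).pow 2)
  refine (hnum.div hden (by positivity)).congr_deriv ?_
  field_simp
  linear_combination (x ^ 3 * cos x - x ^ 2 * cos x ^ 2) * sin_sq_add_cos_sq x

noncomputable def fTau (τ lam : ℝ) : ℝ := cos (τ * lam) / (2 * lam * (1 - sin (τ * lam)))

theorem fTau_eq_mul_fTau_one {τ : ℝ} (hτ : τ ≠ 0) (lam : ℝ) :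
    fTau τ lam = τ * fTau 1 (τ * lam) := by
  rw [fTau, fTau, one_mul, mul_div_assoc', ← mul_div_mul_left _ _ hτ]
  congr 1
  ring

theorem eqOn_fTau_one :
    EqOn (fun t => (1 + sin t) / (2 * t * cos t)) (fTau 1) (Ioo 0 (π / 2)) := by
  intro t ht
  have hc : cos t ≠ 0 := (cos_pos_of_mem_Ioo ⟨by linarith [pi_pos, ht.1], ht.2⟩).ne'
  rw [fTau, one_mul, mul_comm (2 * t), ← div_div, cos_div_one_sub_sin hc, div_div, mul_comm]

theorem strictConvexOn_fTau_one : StrictConvexOn ℝ (Ioo 0 (π / 2)) (fTau 1) := by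
  have hcos : ∀ x ∈ Ioo 0 (π / 2), 0 < cos x := fun x hx =>
    cos_pos_of_mem_Ioo ⟨by linarith [pi_pos, hx.1], hx.2⟩
  refine StrictConvexOn.congr ?_ eqOn_fTau_one
  refine strictConvexOn_of_hasDerivAt2_pos (convex_Ioo _ _) isOpen_Ioo
    (fun x hx => hasDerivAt_one_add_sin_div_mul_cos hx.1.ne' (hcos x hx).ne')
    (fun x hx => hasDerivAt_one_add_sin_mul_sub_cos_div hx.1.ne' (hcos x hx).ne')
    fun x hx => ?_
  have hx₀ : 0 < x := hx.1
  have hc : 0 < cos x := hcos x hx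
  have hs : 0 < sin x := sin_pos_of_pos_of_lt_pi hx.1 (by linarith [pi_pos, hx.2])
  positivity

/-- For every fixed `τ > 0`, the per-eigenvalue performance function
`f_τ(λ) = cos(τλ)/(2λ(1 − sin(τλ)))` is strictly convex on `(0, π/(2τ))`. -/
theorem fTau_strictConvexOn (τ : ℝ) (hτ : 0 < τ) :
    StrictConvexOn ℝ (Set.Ioo 0 (Real.pi / (2 * τ)))
      (fun lam : ℝ => Real.cos (τ * lam) / (2 * lam * (1 - Real.sin (τ * lam)))) := by
  have h := (strictConvexOn_fTau_one.comp_const_mul hτ.ne').const_mul hτ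
  rw [preimage_const_mul_Ioo₀ _ _ hτ, zero_div, div_div] at h
  exact h.congr fun lam _ => (fTau_eq_mul_fTau_one hτ.ne' lam).symm
end

section
/- Let τ > 0, m ≥ 1, and let x : Fin m → ℝ be a vector with 0 < x_i < π/(2τ) for every i, and let D be an m×m doubly stochastic matrix. Then Σ_{i} f_τ((D x)_i) ≤ Σ_{i} f_τ(x_i), where f_τ(λ) = cos(τλ)/(2λ(1 − sin(τλ))). (In particular all entries of D x lie in (0, π/(2τ)), since each is a convex combination of the entries of x.) -/
open Real

lemma aux_sin_lt_one {u : ℝ} (hu0 : 0 < u) (hu1 : u < π / 2) : Real.sin u < 1 := by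
  calc Real.sin u < Real.sin (π/2) :=
        Real.sin_lt_sin_of_lt_of_le_pi_div_two (by linarith [Real.pi_pos]) le_rfl hu1
     _ = 1 := Real.sin_pi_div_two

lemma aux_deriv1 (τ : ℝ) {y : ℝ} (hy0 : 0 < y) (hu0 : 0 < τ * y) (hu1 : τ * y < π / 2) :
    HasDerivAt (fun z => Real.cos (τ * z) / (2 * z * (1 - Real.sin (τ * z))))
      ((τ * y - Real.cos (τ * y)) / (2 * y ^ 2 * (1 - Real.sin (τ * y)))) y := by
  have hs1 : Real.sin (τ * y) < 1 := aux_sin_lt_one hu0 hu1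
  have hs1' : (0:ℝ) < 1 - Real.sin (τ * y) := by linarith
  have hne : 2 * y * (1 - Real.sin (τ * y)) ≠ 0 := by positivity
  have hu : HasDerivAt (fun z : ℝ => τ * z) τ y := by
    simpa using (hasDerivAt_id y).const_mul τ
  have hcos : HasDerivAt (fun z => Real.cos (τ * z)) (-Real.sin (τ * y) * τ) y := hu.cos
  have hsin : HasDerivAt (fun z => Real.sin (τ * z)) (Real.cos (τ * y) * τ) y := hu.sin
  have hd : HasDerivAt (fun z => 2 * z * (1 - Real.sin (τ * z)))
      (2 * (1 - Real.sin (τ * y)) + 2 * y * -(Real.cos (τ * y) * τ)) y := by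
    have h1 : HasDerivAt (fun z : ℝ => 2 * z) 2 y := by
      simpa using (hasDerivAt_id y).const_mul 2
    have h2 : HasDerivAt (fun z => 1 - Real.sin (τ * z)) (-(Real.cos (τ * y) * τ)) y := by
      exact hsin.const_sub 1
    exact h1.mul h2
  have h := hcos.div hd hne
  refine h.congr_deriv ?_
  have pyth := Real.sin_sq_add_cos_sq (τ * y)
  field_simp
  linear_combination (τ * y) * pyth

lemma aux_deriv2 (τ : ℝ) {y : ℝ} (hy0 : 0 < y) (hu0 : 0 < τ * y) (hu1 : τ * y < π / 2) :
    HasDerivAt (fun z => (τ * z - Real.cos (τ * z)) / (2 * z ^ 2 * (1 - Real.sin (τ * z))))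
      ((τ ^ 2 * y ^ 2 * Real.cos (τ * y) - 2 * (1 - Real.sin (τ * y)) * (τ * y - Real.cos (τ * y)))
        / (2 * y ^ 3 * (1 - Real.sin (τ * y)) ^ 2)) y := by
  have hs1 : Real.sin (τ * y) < 1 := aux_sin_lt_one hu0 hu1
  have hs1' : (0:ℝ) < 1 - Real.sin (τ * y) := by linarith
  have hne : 2 * y ^ 2 * (1 - Real.sin (τ * y)) ≠ 0 := by positivity
  have hu : HasDerivAt (fun z : ℝ => τ * z) τ y := by
    simpa using (hasDerivAt_id y).const_mul τ
  have hcos : HasDerivAt (fun z => Real.cos (τ * z)) (-Real.sin (τ * y) * τ) y := hu.cos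
  have hsin : HasDerivAt (fun z => Real.sin (τ * z)) (Real.cos (τ * y) * τ) y := hu.sin
  have hnum : HasDerivAt (fun z => τ * z - Real.cos (τ * z)) (τ - -Real.sin (τ * y) * τ) y :=
    hu.sub hcos
  have hd : HasDerivAt (fun z => 2 * z ^ 2 * (1 - Real.sin (τ * z)))
      (4 * y * (1 - Real.sin (τ * y)) + 2 * y ^ 2 * -(Real.cos (τ * y) * τ)) y := by
    have h1 : HasDerivAt (fun z : ℝ => 2 * z ^ 2) (4 * y) y := by
      have := ((hasDerivAt_pow 2 y)).const_mul (2:ℝ)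
      norm_num at this
      exact this.congr_deriv (by ring)
    have h2 : HasDerivAt (fun z => 1 - Real.sin (τ * z)) (-(Real.cos (τ * y) * τ)) y := by
      exact hsin.const_sub 1
    exact h1.mul h2
  have h := hnum.div hd hne
  refine h.congr_deriv ?_
  have pyth := Real.sin_sq_add_cos_sq (τ * y)
  field_simp
  linear_combination (-2 * τ * y) * pyth

lemma aux_convex (τ : ℝ) (hτ : 0 < τ) :
    ConvexOn ℝ (Set.Ioo 0 (π / (2 * τ)))
      (fun z => Real.cos (τ * z) / (2 * z * (1 - Real.sin (τ * z)))) := by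
  have hfacts : ∀ y ∈ Set.Ioo 0 (π / (2 * τ)), 0 < y ∧ 0 < τ * y ∧ τ * y < π / 2 := by
    intro y hy
    refine ⟨hy.1, mul_pos hτ hy.1, ?_⟩
    have := (mul_lt_mul_iff_right₀ hτ).2 hy.2
    calc τ * y < τ * (π / (2 * τ)) := this
      _ = π / 2 := by field_simp
  refine (strictConvexOn_of_deriv2_pos (convex_Ioo _ _) ?_ ?_).convexOn
  · intro y hy
    obtain ⟨hy0, hu0, hu1⟩ := hfacts y hy
    exact (aux_deriv1 τ hy0 hu0 hu1).continuousAt.continuousWithinAt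
  · intro y hy
    rw [interior_Ioo] at hy
    obtain ⟨hy0, hu0, hu1⟩ := hfacts y hy
    have hs1 : Real.sin (τ * y) < 1 := aux_sin_lt_one hu0 hu1
    have hs0 : 0 < Real.sin (τ * y) := Real.sin_pos_of_pos_of_lt_pi hu0
      (by linarith [Real.pi_pos])
    have hc : 0 < Real.cos (τ * y) := Real.cos_pos_of_mem_Ioo
      ⟨by linarith, hu1⟩
    have hEq : deriv (fun z => Real.cos (τ * z) / (2 * z * (1 - Real.sin (τ * z))))
        =ᶠ[nhds y] (fun z => (τ * z - Real.cos (τ * z)) / (2 * z ^ 2 * (1 - Real.sin (τ * z)))) := by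
      filter_upwards [isOpen_Ioo.mem_nhds hy] with z hz
      obtain ⟨hz0, hv0, hv1⟩ := hfacts z hz
      exact (aux_deriv1 τ hz0 hv0 hv1).deriv
    have h2 : deriv^[2] (fun z => Real.cos (τ * z) / (2 * z * (1 - Real.sin (τ * z)))) y
        = (τ ^ 2 * y ^ 2 * Real.cos (τ * y)
            - 2 * (1 - Real.sin (τ * y)) * (τ * y - Real.cos (τ * y)))
          / (2 * y ^ 3 * (1 - Real.sin (τ * y)) ^ 2) := by
      show deriv (deriv _) y = _
      rw [hEq.deriv_eq]
      exact (aux_deriv2 τ hy0 hu0 hu1).deriv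
    rw [h2]
    set s := Real.sin (τ * y)
    set c := Real.cos (τ * y)
    have pyth : s ^ 2 + c ^ 2 = 1 := Real.sin_sq_add_cos_sq (τ * y)
    have hkey : (1 + s) ^ 2 * (τ ^ 2 * y ^ 2 * c - 2 * (1 - s) * (τ * y - c))
        = c * ((τ * y * (1 + s) - c) ^ 2 + c ^ 2 * (1 + 2 * s)) := by
      linear_combination (2 * (1 + s) * (τ * y - c)) * pyth
    have hP : 0 < c * ((τ * y * (1 + s) - c) ^ 2 + c ^ 2 * (1 + 2 * s)) := by
      apply mul_pos hc
      nlinarith [sq_nonneg (τ * y * (1 + s) - c), mul_pos (mul_pos hc hc) hs0]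
    have hq : (0:ℝ) < (1 + s) ^ 2 := by nlinarith
    have hnum : 0 < τ ^ 2 * y ^ 2 * c - 2 * (1 - s) * (τ * y - c) := by nlinarith
    have hden : 0 < 2 * y ^ 3 * (1 - s) ^ 2 := by
      have : (0:ℝ) < 1 - s := by linarith
      positivity
    exact div_pos hnum hden

/-- Schur-convexity of the performance measure: for `τ > 0`, a vector `x` with
entries in `(0, π/(2τ))`, and a doubly stochastic matrix `D`,
`Σᵢ f_τ((D x)ᵢ) ≤ Σᵢ f_τ(xᵢ)` where `f_τ(λ) = cos(τλ)/(2λ(1 − sin(τλ)))`. -/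
theorem performance_schur_convex (τ : ℝ) (hτ : 0 < τ) (m : ℕ) (hm : 1 ≤ m)
    (x : Fin m → ℝ) (hx : ∀ i, x i ∈ Set.Ioo 0 (Real.pi / (2 * τ)))
    (D : Matrix (Fin m) (Fin m) ℝ)
    (hDpos : ∀ i j, 0 ≤ D i j)
    (hDrow : ∀ i, ∑ j, D i j = 1)
    (hDcol : ∀ j, ∑ i, D i j = 1) :
    ∑ i, Real.cos (τ * (D.mulVec x) i) /
        (2 * (D.mulVec x) i * (1 - Real.sin (τ * (D.mulVec x) i))) ≤
      ∑ i, Real.cos (τ * x i) / (2 * x i * (1 - Real.sin (τ * x i))) := by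
  set f : ℝ → ℝ := fun z => Real.cos (τ * z) / (2 * z * (1 - Real.sin (τ * z))) with hf
  have hconv := aux_convex τ hτ
  have hmv : ∀ i, (D.mulVec x) i = ∑ j, D i j • x j := by
    intro i
    simp [Matrix.mulVec, dotProduct, smul_eq_mul]
  have step1 : ∀ i, f ((D.mulVec x) i) ≤ ∑ j, D i j * f (x j) := by
    intro i
    rw [hmv i]
    simpa [smul_eq_mul] using
      hconv.map_sum_le (fun j _ => hDpos i j) (by simpa using hDrow i) (fun j _ => hx j)
  calc ∑ i, f ((D.mulVec x) i) ≤ ∑ i, ∑ j, D i j * f (x j) :=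
        Finset.sum_le_sum fun i _ => step1 i
    _ = ∑ j, (∑ i, D i j) * f (x j) := by
        rw [Finset.sum_comm]
        simp [Finset.sum_mul]
    _ = ∑ j, f (x j) := by simp [hDcol]
end

section
/- Let τ > 0 and let z* be the unique positive solution of cos(z) = z. Then the function f_τ(λ) = cos(τλ)/(2λ(1 − sin(τλ))) is strictly decreasing on the interval (0, z*/τ] and strictly increasing on the interval [z*/τ, π/(2τ)). Consequently λ = z*/τ is the unique minimizer of f_τ on (0, π/(2τ)), and the derivative of f_τ vanishes at λ ∈ (0, π/(2τ)) if and only if cos(τλ) = τλ. -/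
/-!
Writing `u = τλ`, the derivative of `f_τ` is `(u - cos u) / (2λ²(1 - sin u))`. On `(0, π/(2τ))` the
denominator is positive, and `u ↦ u - cos u` is strictly increasing on `[0, π]` with its only zero at
the fixed point `z*` of `cos`, so `f_τ'` is negative before `z*/τ` and positive after it.
-/

open Real Set

lemma strictMonoOn_sub_cos : StrictMonoOn (fun u => u - cos u) (Icc 0 π) := by
  intro a ha b hb hab
  have := strictAntiOn_cos ha hb hab
  dsimp only
  linarith

lemma lt_pi_div_two_of_cos_eq_self {z : ℝ} (hzfix : cos z = z) : z < π / 2 := by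
  linarith [cos_le_one z, pi_gt_three]

lemma div_lt_pi_div_two_mul_of_cos_eq_self {τ z : ℝ} (hτ : 0 < τ) (hzfix : cos z = z) :
    z / τ < π / (2 * τ) := by
  rw [← div_div]
  gcongr
  exact lt_pi_div_two_of_cos_eq_self hzfix

lemma mem_Icc_of_cos_eq_self {z : ℝ} (hz : 0 ≤ z) (hzfix : cos z = z) : z ∈ Icc 0 π :=
  ⟨hz, by linarith [lt_pi_div_two_of_cos_eq_self hzfix, pi_pos]⟩

lemma lt_cos_self_iff {z u : ℝ} (hz : 0 ≤ z) (hzfix : cos z = z) (hu : u ∈ Icc 0 π) :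
    u < cos u ↔ u < z := by
  rw [← strictMonoOn_sub_cos.lt_iff_lt hu (mem_Icc_of_cos_eq_self hz hzfix), hzfix, sub_self,
    sub_neg]

lemma cos_lt_self_iff {z u : ℝ} (hz : 0 ≤ z) (hzfix : cos z = z) (hu : u ∈ Icc 0 π) :
    cos u < u ↔ z < u := by
  rw [← strictMonoOn_sub_cos.lt_iff_lt (mem_Icc_of_cos_eq_self hz hzfix) hu, hzfix, sub_self,
    sub_pos]

lemma sin_lt_one_of_mem_Ioo {u : ℝ} (hu : u ∈ Ioo 0 (π / 2)) : sin u < 1 := by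
  simpa using sin_lt_sin_of_lt_of_le_pi_div_two (by linarith [hu.1, pi_pos]) le_rfl hu.2

lemma mul_mem_Ioo_pi_div_two {τ lam : ℝ} (hτ : 0 < τ) (hlam : lam ∈ Ioo 0 (π / (2 * τ))) :
    τ * lam ∈ Ioo 0 (π / 2) := by
  refine ⟨mul_pos hτ hlam.1, ?_⟩
  calc τ * lam < τ * (π / (2 * τ)) := mul_lt_mul_of_pos_left hlam.2 hτ
    _ = π / 2 := by field_simp

lemma hasDerivAt_fTau (τ : ℝ) {lam : ℝ} (hlam : lam ≠ 0) (hs : sin (τ * lam) ≠ 1) :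
    HasDerivAt (fTau τ)
      ((τ * lam - cos (τ * lam)) / (2 * lam ^ 2 * (1 - sin (τ * lam)))) lam := by
  have hτl : HasDerivAt (τ * ·) τ lam := hasDerivAt_const_mul τ
  have hnum : HasDerivAt (fun l => cos (τ * l)) (-sin (τ * lam) * τ) lam :=
    (hasDerivAt_cos _).comp lam hτl
  have hden : HasDerivAt (fun l => 2 * l * (1 - sin (τ * l)))
      (2 * (1 - sin (τ * lam)) + 2 * lam * -(cos (τ * lam) * τ)) lam :=
    (hasDerivAt_const_mul 2).mul (((hasDerivAt_sin (τ * lam)).comp lam hτl).const_sub 1)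
  have hsne : 1 - sin (τ * lam) ≠ 0 := sub_ne_zero.mpr hs.symm
  refine (hnum.div hden (by simp [hlam, hsne])).congr_deriv ?_
  field_simp
  linear_combination (τ * lam) * sin_sq_add_cos_sq (τ * lam)

lemma hasDerivAt_fTau_of_mem_Ioo {τ lam : ℝ} (hτ : 0 < τ) (hlam : lam ∈ Ioo 0 (π / (2 * τ))) :
    HasDerivAt (fTau τ)
      ((τ * lam - cos (τ * lam)) / (2 * lam ^ 2 * (1 - sin (τ * lam)))) lam :=
  hasDerivAt_fTau τ hlam.1.ne' (sin_lt_one_of_mem_Ioo (mul_mem_Ioo_pi_div_two hτ hlam)).ne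

lemma two_mul_sq_mul_one_sub_sin_pos {τ lam : ℝ} (hτ : 0 < τ)
    (hlam : lam ∈ Ioo 0 (π / (2 * τ))) : 0 < 2 * lam ^ 2 * (1 - sin (τ * lam)) :=
  mul_pos (by have := hlam.1; positivity)
    (sub_pos.mpr (sin_lt_one_of_mem_Ioo (mul_mem_Ioo_pi_div_two hτ hlam)))

lemma Ioo_zero_pi_div_two_subset_Icc : Ioo 0 (π / 2) ⊆ Icc 0 π :=
  Ioo_subset_Icc_self.trans (Icc_subset_Icc_right (by linarith [pi_pos]))

lemma continuousOn_fTau {τ : ℝ} (hτ : 0 < τ) : ContinuousOn (fTau τ) (Ioo 0 (π / (2 * τ))) :=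
  fun _ hlam => (hasDerivAt_fTau_of_mem_Ioo hτ hlam).continuousAt.continuousWithinAt

lemma strictAntiOn_fTau {τ z : ℝ} (hτ : 0 < τ) (hz : 0 ≤ z) (hzfix : cos z = z) :
    StrictAntiOn (fTau τ) (Ioc 0 (z / τ)) := by
  have hsub : Ioc 0 (z / τ) ⊆ Ioo 0 (π / (2 * τ)) := fun _ hx =>
    ⟨hx.1, hx.2.trans_lt (div_lt_pi_div_two_mul_of_cos_eq_self hτ hzfix)⟩
  refine strictAntiOn_of_deriv_neg (convex_Ioc _ _) ((continuousOn_fTau hτ).mono hsub)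
    fun lam hlam => ?_
  rw [interior_Ioc] at hlam
  have hmem := hsub (Ioo_subset_Ioc_self hlam)
  rw [(hasDerivAt_fTau_of_mem_Ioo hτ hmem).deriv]
  refine div_neg_of_neg_of_pos ?_ (two_mul_sq_mul_one_sub_sin_pos hτ hmem)
  rw [sub_neg, lt_cos_self_iff hz hzfix
    (Ioo_zero_pi_div_two_subset_Icc (mul_mem_Ioo_pi_div_two hτ hmem)), ← lt_div_iff₀' hτ]
  exact hlam.2

lemma strictMonoOn_fTau {τ z : ℝ} (hτ : 0 < τ) (hz : 0 < z) (hzfix : cos z = z) :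
    StrictMonoOn (fTau τ) (Ico (z / τ) (π / (2 * τ))) := by
  have hsub : Ico (z / τ) (π / (2 * τ)) ⊆ Ioo 0 (π / (2 * τ)) := fun _ hx =>
    ⟨(div_pos hz hτ).trans_le hx.1, hx.2⟩
  refine strictMonoOn_of_deriv_pos (convex_Ico _ _) ((continuousOn_fTau hτ).mono hsub)
    fun lam hlam => ?_
  rw [interior_Ico] at hlam
  have hmem := hsub (Ioo_subset_Ico_self hlam)
  rw [(hasDerivAt_fTau_of_mem_Ioo hτ hmem).deriv]
  refine div_pos ?_ (two_mul_sq_mul_one_sub_sin_pos hτ hmem)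
  rw [sub_pos, cos_lt_self_iff hz.le hzfix
    (Ioo_zero_pi_div_two_subset_Icc (mul_mem_Ioo_pi_div_two hτ hmem)), ← div_lt_iff₀' hτ]
  exact hlam.1

lemma lt_of_strictAntiOn_Ioc_of_strictMonoOn_Ico {α β : Type*} [LinearOrder α] [Preorder β]
    {f : α → β} {a b m x : α} (hanti : StrictAntiOn f (Ioc a m)) (hmono : StrictMonoOn f (Ico m b))
    (hm : m ∈ Ioo a b) (hx : x ∈ Ioo a b) (hxm : x ≠ m) : f m < f x := by
  rcases hxm.lt_or_gt with h | h
  · exact hanti ⟨hx.1, h.le⟩ ⟨hm.1, le_rfl⟩ h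
  · exact hmono ⟨le_rfl, hm.2⟩ ⟨h.le, hx.2⟩ h

lemma deriv_fTau_eq_zero_iff {τ lam : ℝ} (hτ : 0 < τ) (hlam : lam ∈ Ioo 0 (π / (2 * τ))) :
    deriv (fTau τ) lam = 0 ↔ cos (τ * lam) = τ * lam := by
  rw [(hasDerivAt_fTau_of_mem_Ioo hτ hlam).deriv, div_eq_zero_iff,
    or_iff_left (two_mul_sq_mul_one_sub_sin_pos hτ hlam).ne', sub_eq_zero, eq_comm]

/-- Let `τ > 0` and `z*` the unique positive solution of `cos z = z`. Then
`f_τ(λ) = cos(τλ)/(2λ(1 − sin(τλ)))` is strictly decreasing on `(0, z*/τ]`,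
strictly increasing on `[z*/τ, π/(2τ))`, `λ = z*/τ` is the unique minimizer of
`f_τ` on `(0, π/(2τ))`, and the derivative of `f_τ` vanishes at
`λ ∈ (0, π/(2τ))` iff `cos(τλ) = τλ`. -/
theorem fTau_monotonicity_and_minimizer (τ : ℝ) (hτ : 0 < τ)
    (z : ℝ) (hz : 0 < z) (hzfix : Real.cos z = z) :
    StrictAntiOn (fun lam : ℝ => Real.cos (τ * lam) / (2 * lam * (1 - Real.sin (τ * lam))))
        (Set.Ioc 0 (z / τ)) ∧
      StrictMonoOn (fun lam : ℝ => Real.cos (τ * lam) / (2 * lam * (1 - Real.sin (τ * lam))))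
        (Set.Ico (z / τ) (Real.pi / (2 * τ))) ∧
      (∀ lam ∈ Set.Ioo (0 : ℝ) (Real.pi / (2 * τ)), lam ≠ z / τ →
        Real.cos (τ * (z / τ)) / (2 * (z / τ) * (1 - Real.sin (τ * (z / τ)))) <
          Real.cos (τ * lam) / (2 * lam * (1 - Real.sin (τ * lam)))) ∧
      (∀ lam ∈ Set.Ioo (0 : ℝ) (Real.pi / (2 * τ)),
        (deriv (fun l : ℝ => Real.cos (τ * l) / (2 * l * (1 - Real.sin (τ * l)))) lam = 0 ↔
          Real.cos (τ * lam) = τ * lam)) := by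
  have hanti := strictAntiOn_fTau hτ hz.le hzfix
  have hmono := strictMonoOn_fTau hτ hz hzfix
  have hmin : z / τ ∈ Ioo 0 (π / (2 * τ)) :=
    ⟨div_pos hz hτ, div_lt_pi_div_two_mul_of_cos_eq_self hτ hzfix⟩
  exact ⟨hanti, hmono,
    fun _ hlam hne => lt_of_strictAntiOn_Ioc_of_strictMonoOn_Ico hanti hmono hmin hlam hne,
    fun _ hlam => deriv_fTau_eq_zero_iff hτ hlam⟩
end

section
/- Let p, q ≥ 1 and let a : Fin p → ℝ and b : Fin q → ℝ be families of positive reals (the nonzero Laplacian eigenvalues of two networks), and suppose max_i a_i > max_j b_j. Then there exists τ* with 0 < τ* < π/(2·max_i a_i) such that for every τ with τ* < τ < π/(2·max_i a_i), Σ_j f_τ(b_j) < Σ_i f_τ(a_i), where f_τ(λ) = cos(τλ)/(2λ(1 − sin(τλ))). -/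
open Real Filter Set Topology

/-- Basic facts about `τ*c` when `τ ∈ (0, π/(2A))` and `0 < c ≤ A`. -/
lemma aux_angle {A c τ : ℝ} (hA : 0 < A) (hc : 0 < c) (hcA : c ≤ A)
    (hτ : 0 < τ) (hτT : τ < Real.pi / (2 * A)) :
    0 < τ * c ∧ τ * c < Real.pi / 2 := by
  constructor
  · positivity
  · calc τ * c ≤ τ * A := by nlinarith
    _ < Real.pi / (2 * A) * A := by nlinarith
    _ = Real.pi / 2 := by field_simp

lemma aux_sin_lt_one_s10 {x : ℝ} (hx : 0 < x) (hx2 : x < Real.pi / 2) :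
    Real.sin x < 1 := by
  have := Real.sin_lt_sin_of_lt_of_le_pi_div_two (x := x) (y := Real.pi / 2)
    (by linarith [Real.pi_pos]) le_rfl hx2
  simpa using this

/-- If the largest (nonzero Laplacian) eigenvalue of the first network exceeds
that of the second, then there is a delay threshold `τ*` beyond which the
second network has strictly smaller performance:
`Σⱼ f_τ(bⱼ) < Σᵢ f_τ(aᵢ)` for all `τ ∈ (τ*, π/(2·maxᵢ aᵢ))`, where
`f_τ(λ) = cos(τλ)/(2λ(1 − sin(τλ)))`. -/
theorem delay_threshold_performance_ordering (p q : ℕ) (hp : 1 ≤ p) (hq : 1 ≤ q)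
    (a : Fin p → ℝ) (b : Fin q → ℝ)
    (ha : ∀ i, 0 < a i) (hb : ∀ j, 0 < b j)
    (amax bmax : ℝ)
    (hamax : IsGreatest (Set.range a) amax)
    (hbmax : IsGreatest (Set.range b) bmax)
    (hmax : bmax < amax) :
    ∃ τstar : ℝ, 0 < τstar ∧ τstar < Real.pi / (2 * amax) ∧
      ∀ τ : ℝ, τstar < τ → τ < Real.pi / (2 * amax) →
        ∑ j, Real.cos (τ * b j) / (2 * b j * (1 - Real.sin (τ * b j))) <
          ∑ i, Real.cos (τ * a i) / (2 * a i * (1 - Real.sin (τ * a i))) := by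
  obtain ⟨i₀, hi₀⟩ := hamax.1
  have hA : 0 < amax := hi₀ ▸ ha i₀
  set T : ℝ := Real.pi / (2 * amax) with hTdef
  have hT : 0 < T := by positivity
  set F : ℝ → ℝ := fun τ => ∑ i, Real.cos (τ * a i) / (2 * a i * (1 - Real.sin (τ * a i)))
  set G : ℝ → ℝ := fun τ => ∑ j, Real.cos (τ * b j) / (2 * b j * (1 - Real.sin (τ * b j)))
  -- membership in Ioo (T/2) T is eventual in 𝓝[<] T
  have hIoo : Ioo (T / 2) T ∈ 𝓝[<] T :=
    mem_nhdsLT_iff_exists_Ioo_subset.2 ⟨T / 2, by simp [hT], le_rfl⟩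
  -- F tends to atTop
  have hFtop : Tendsto F (𝓝[<] T) atTop := by
    -- the dominating single term, rewritten
    have hcos0 : Tendsto (fun τ => Real.cos (τ * amax)) (𝓝[<] T) (𝓝[>] 0) := by
      apply tendsto_nhdsWithin_of_tendsto_nhds_of_eventually_within
      · have : Real.cos (T * amax) = 0 := by
          rw [show T * amax = Real.pi / 2 by rw [hTdef]; field_simp]
          exact Real.cos_pi_div_two
        have hc : Continuous fun τ : ℝ => Real.cos (τ * amax) := by fun_prop
        have h0 := hc.tendsto T
        rw [show Real.cos (T * amax) = 0 from ‹_›] at h0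
        exact h0.mono_left nhdsWithin_le_nhds
      · filter_upwards [hIoo] with τ hτ
        have h := aux_angle hA hA le_rfl (lt_trans (by linarith) hτ.1) hτ.2
        exact Real.cos_pos_of_mem_Ioo ⟨by linarith [h.1, Real.pi_pos], h.2⟩
    have hinv : Tendsto (fun τ => (Real.cos (τ * amax))⁻¹) (𝓝[<] T) atTop :=
      tendsto_inv_nhdsGT_zero.comp hcos0
    have hnum : Tendsto (fun τ => (1 + Real.sin (τ * amax)) / (2 * amax)) (𝓝[<] T)
        (𝓝 ((1 + 1) / (2 * amax))) := by
      have : Real.sin (T * amax) = 1 := by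
        rw [show T * amax = Real.pi / 2 by rw [hTdef]; field_simp]
        exact Real.sin_pi_div_two
      have hc : Continuous fun τ : ℝ => (1 + Real.sin (τ * amax)) / (2 * amax) := by
        fun_prop
      have h := (hc.tendsto T).mono_left (nhdsWithin_le_nhds (s := Iio T))
      simpa [this] using h
    have hg : Tendsto (fun τ => (1 + Real.sin (τ * amax)) / (2 * amax) *
        (Real.cos (τ * amax))⁻¹) (𝓝[<] T) atTop :=
      Filter.Tendsto.pos_mul_atTop (by positivity) hnum hinv
    apply tendsto_atTop_mono' _ _ hg
    filter_upwards [hIoo] with τ hτ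
    have hτ0 : 0 < τ := lt_trans (by linarith) hτ.1
    have key : ∀ i : Fin p, 0 ≤ Real.cos (τ * a i) / (2 * a i * (1 - Real.sin (τ * a i))) := by
      intro i
      have h := aux_angle hA (ha i) (hamax.2 ⟨i, rfl⟩) hτ0 hτ.2
      have hc := Real.cos_pos_of_mem_Ioo ⟨by linarith [h.1, Real.pi_pos], h.2⟩
      have hs := aux_sin_lt_one_s10 h.1 h.2
      exact div_nonneg hc.le (by nlinarith [ha i])
    have h := aux_angle hA hA le_rfl hτ0 hτ.2
    have hc := Real.cos_pos_of_mem_Ioo (show τ * amax ∈ Ioo (-(Real.pi/2)) (Real.pi/2) from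
      ⟨by linarith [h.1, Real.pi_pos], h.2⟩)
    have hs := aux_sin_lt_one_s10 h.1 h.2
    have heq : (1 + Real.sin (τ * amax)) / (2 * amax) * (Real.cos (τ * amax))⁻¹ =
        Real.cos (τ * amax) / (2 * amax * (1 - Real.sin (τ * amax))) := by
      have h1 : Real.cos (τ * amax) ≠ 0 := ne_of_gt hc
      have h2 : 1 - Real.sin (τ * amax) ≠ 0 := by nlinarith
      field_simp
      nlinarith [Real.sin_sq_add_cos_sq (τ * amax)]
    rw [heq]
    calc Real.cos (τ * amax) / (2 * amax * (1 - Real.sin (τ * amax)))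
        = Real.cos (τ * a i₀) / (2 * a i₀ * (1 - Real.sin (τ * a i₀))) := by rw [hi₀]
      _ ≤ F τ := Finset.single_le_sum (fun i _ => key i) (Finset.mem_univ i₀)
  -- G tends to a finite limit
  have hGlim : Tendsto G (𝓝[<] T) (𝓝 (G T)) := by
    apply tendsto_finset_sum
    intro j _
    have hct : ContinuousAt
        (fun τ => Real.cos (τ * b j) / (2 * b j * (1 - Real.sin (τ * b j)))) T := by
      have hbj : 0 < b j := hb j
      have hbA : b j ≤ bmax := hbmax.2 ⟨j, rfl⟩
      have h1 : 0 < T * b j := by positivity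
      have h2 : T * b j < Real.pi / 2 := by
        calc T * b j ≤ T * bmax := by nlinarith
          _ < T * amax := by nlinarith
          _ = Real.pi / 2 := by rw [hTdef]; field_simp
      have hs := aux_sin_lt_one_s10 h1 h2
      have hd : (0:ℝ) < 2 * b j * (1 - Real.sin (T * b j)) := by nlinarith
      apply ContinuousAt.div
      · fun_prop
      · fun_prop
      · exact ne_of_gt hd
    exact hct.continuousWithinAt
  -- eventually G < F
  have hev : ∀ᶠ τ in 𝓝[<] T, G τ < F τ := by
    filter_upwards [hFtop.eventually_ge_atTop (G T + 1),
      hGlim.eventually (gt_mem_nhds (show G T < G T + 1 by linarith))] with τ h1 h2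
    linarith
  obtain ⟨l, hl, hsub⟩ := mem_nhdsLT_iff_exists_Ioo_subset.1 hev
  refine ⟨max l (T / 2), lt_max_of_lt_right (by linarith), max_lt hl (by linarith), ?_⟩
  intro τ hτ1 hτ2
  exact hsub ⟨lt_of_le_of_lt (le_max_left _ _) hτ1, hτ2⟩
end

section
/- Let n ≥ 2 and let L be the Laplacian matrix of the (unweighted) path graph on n vertices. Then for every vector x : Fin n → ℝ, the quadratic form satisfies xᵀ L x ≤ (2 − 2·cos((n−1)π/n))·‖x‖². In particular, since 2 − 2·cos((n−1)π/n) < 4, the largest Laplacian eigenvalue of the path graph is strictly less than 4. -/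
open Real Matrix Finset

private lemma trig_pair (a t : ℝ) :
    Real.sin (a + t) + Real.sin (a - t) = 2 * Real.cos t * Real.sin a := by
  rw [Real.sin_add, Real.sin_sub]; ring

private lemma trig_end (s : ℝ) :
    Real.sin s + Real.sin (3 * s) = (2 + 2 * Real.cos (2 * s)) * Real.sin s := by
  rw [show (3 : ℝ) * s = s + 2 * s by ring, Real.sin_add, Real.sin_two_mul,
    Real.cos_two_mul]
  ring

/-- For the Laplacian `L` of the unweighted path graph on `n ≥ 2` vertices,
the quadratic form satisfies `xᵀ L x ≤ (2 − 2cos((n−1)π/n))·‖x‖²` for every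
`x`, and `2 − 2cos((n−1)π/n) < 4`; in particular the largest Laplacian
eigenvalue of the path graph is strictly less than `4`. -/
theorem pathGraph_lapMatrix_quadratic_form_bound (n : ℕ) (hn : 2 ≤ n)
    [DecidableRel (SimpleGraph.pathGraph n).Adj] :
    (∀ x : Fin n → ℝ,
        x ⬝ᵥ ((SimpleGraph.pathGraph n).lapMatrix ℝ).mulVec x ≤
          (2 - 2 * Real.cos ((n - 1 : ℝ) * Real.pi / n)) * ∑ i, x i ^ 2) ∧
      2 - 2 * Real.cos ((n - 1 : ℝ) * Real.pi / n) < 4 := by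
  have hn0 : (0 : ℝ) < n := by positivity
  have hn2 : (2 : ℝ) ≤ n := by exact_mod_cast hn
  set s : ℝ := π / (2 * n) with hs
  have hs_pos : 0 < s := by
    apply div_pos Real.pi_pos; positivity
  have h2ns : 2 * (n : ℝ) * s = π := by
    rw [hs]; field_simp
  have hmu : 2 - 2 * Real.cos ((n - 1 : ℝ) * Real.pi / n) = 2 + 2 * Real.cos (2 * s) := by
    have h1 : ((n : ℝ) - 1) * Real.pi / n = π - 2 * s := by
      rw [hs]; field_simp
    rw [h1, Real.cos_pi_sub]; ring
  set W : ℕ → ℝ := fun k => Real.sin ((2 * (k : ℝ) + 1) * s) with hW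
  have hW_pos : ∀ k : ℕ, k < n → 0 < W k := by
    intro k hk
    apply Real.sin_pos_of_pos_of_lt_pi
    · positivity
    · rw [← h2ns]
      have : (2 * (k : ℝ) + 1) < 2 * n := by
        have : (k : ℝ) + 1 ≤ n := by exact_mod_cast hk
        linarith
      nlinarith
  -- the key signless-Laplacian eigen identity, over ℕ
  have key : ∀ m : ℕ, m < n →
      (∑ k ∈ Finset.range n, if (m + 1 = k ∨ k + 1 = m) then (W m + W k) else 0)
        = (2 + 2 * Real.cos (2 * s)) * W m := by
    intro m hm
    have hsplit : ∀ k : ℕ, (if (m + 1 = k ∨ k + 1 = m) then (W m + W k) else 0)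
        = (if m + 1 = k then (W m + W k) else 0) + (if k + 1 = m then (W m + W k) else 0) := by
      intro k
      by_cases h1 : m + 1 = k <;> by_cases h2 : k + 1 = m <;>
        simp [h1, h2] <;> omega
    simp_rw [hsplit]
    rw [Finset.sum_add_distrib]
    rw [Finset.sum_ite_eq (Finset.range n) (m + 1) (fun k => W m + W k)]
    rcases m with _ | m'
    · -- m = 0 : left endpoint
      have h1n : 0 + 1 ∈ Finset.range n := by simp; omega
      rw [if_pos h1n]
      have hz : (∑ k ∈ Finset.range n, if k + 1 = 0 then (W 0 + W k) else 0) = 0 := by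
        apply Finset.sum_eq_zero; intro k _; simp
      rw [hz, add_zero]
      have e0 : W 0 = Real.sin s := by simp [hW]
      have e1 : W (0 + 1) = Real.sin (3 * s) := by
        simp only [hW]; norm_num
      rw [e0, e1]
      linear_combination trig_end s
    · -- m = m' + 1
      have hsum2 : (∑ k ∈ Finset.range n, if k + 1 = m' + 1 then (W (m' + 1) + W k) else 0)
          = W (m' + 1) + W m' := by
        have : ∀ k : ℕ, (k + 1 = m' + 1) = (k = m') := by intro k; simp
        simp_rw [this]
        rw [Finset.sum_ite_eq' (Finset.range n) m' (fun k => W (m' + 1) + W k)]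
        rw [if_pos (by simp; omega)]
      rw [hsum2]
      set a : ℝ := (2 * (m' : ℝ) + 3) * s with ha
      have ea : W (m' + 1) = Real.sin a := by
        simp only [hW, ha]; push_cast; ring_nf
      by_cases hlt : m' + 1 + 1 < n
      · -- interior vertex
        rw [if_pos (by simpa using hlt)]
        have eb : W (m' + 1 + 1) = Real.sin (a + 2 * s) := by
          simp only [hW, ha]; push_cast; ring_nf
        have ec : W m' = Real.sin (a - 2 * s) := by
          simp only [hW, ha]; push_cast; ring_nf
        rw [ea, eb, ec]
        linear_combination trig_pair a (2 * s)
      · -- right endpoint : m' + 2 = n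
        have hne : m' + 1 + 1 = n := by omega
        rw [if_neg (by simpa using hlt), zero_add]
        have hcast : (n : ℝ) = (m' : ℝ) + 2 := by
          rw [← hne]; push_cast; ring
        have c1 : a = π - s := by
          rw [ha, ← h2ns, hcast]; ring
        have c2 : W m' = Real.sin (π - 3 * s) := by
          simp only [hW]
          congr 1
          rw [← h2ns, hcast]; ring
        rw [ea, c1, c2, Real.sin_pi_sub, Real.sin_pi_sub]
        linear_combination trig_end s
  -- Fin-level version
  have keyF : ∀ i : Fin n,
      (∑ j : Fin n, if (SimpleGraph.pathGraph n).Adj i j then (W i.val + W j.val) else 0)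
        = (2 + 2 * Real.cos (2 * s)) * W i.val := by
    intro i
    have : (∑ j : Fin n, if (SimpleGraph.pathGraph n).Adj i j then (W i.val + W j.val) else 0)
        = ∑ j : Fin n, (fun k => if (i.val + 1 = k ∨ k + 1 = i.val) then (W i.val + W k) else 0) j.val := by
      refine Finset.sum_congr rfl fun j _ => ?_
      simp only [SimpleGraph.pathGraph_adj]
    rw [this]
    exact (Fin.sum_univ_eq_sum_range
      (fun k => if (i.val + 1 = k ∨ k + 1 = i.val) then (W i.val + W k) else 0) n).trans
      (key i.val i.isLt)
  refine ⟨?_, ?_⟩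
  · intro x
    set y : Fin n → ℝ := fun i => (-1 : ℝ) ^ (i.val) * x i with hy
    have hsq : ∀ k : ℕ, ((-1 : ℝ) ^ k) ^ 2 = 1 := by
      intro k; rw [← pow_mul, mul_comm, pow_mul, neg_one_sq, one_pow]
    have hyx : ∀ i, y i ^ 2 = x i ^ 2 := by
      intro i; simp only [hy]; rw [mul_pow, hsq, one_mul]
    have hadj_sq : ∀ i j : Fin n, (SimpleGraph.pathGraph n).Adj i j →
        (x i - x j) ^ 2 = (y i + y j) ^ 2 := by
      intro i j hij
      rw [SimpleGraph.pathGraph_adj] at hij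
      have hneg : (-1 : ℝ) ^ (j.val) = -(-1 : ℝ) ^ (i.val) := by
        rcases hij with h | h
        · rw [← h, pow_succ]; ring
        · rw [← h, pow_succ]; ring
      simp only [hy]
      rw [hneg, show ((-1 : ℝ) ^ (i.val) * x i + -(-1 : ℝ) ^ (i.val) * x j)
          = (-1 : ℝ) ^ (i.val) * (x i - x j) by ring, mul_pow, hsq, one_mul]
    have hbound : ∀ i j : Fin n, (SimpleGraph.pathGraph n).Adj i j →
        (y i + y j) ^ 2 ≤ (W i.val + W j.val) / W i.val * y i ^ 2
          + (W i.val + W j.val) / W j.val * y j ^ 2 := by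
      intro i j _
      have hwi := hW_pos i.val i.isLt
      have hwj := hW_pos j.val j.isLt
      have hdiff : (W i.val + W j.val) / W i.val * y i ^ 2
          + (W i.val + W j.val) / W j.val * y j ^ 2 - (y i + y j) ^ 2
          = (W j.val * y i - W i.val * y j) ^ 2 / (W i.val * W j.val) := by
        field_simp
        ring
      have hpos : 0 ≤ (W j.val * y i - W i.val * y j) ^ 2 / (W i.val * W j.val) :=
        div_nonneg (sq_nonneg _) (mul_pos hwi hwj).le
      linarith [hdiff, hpos]
    have hL : x ⬝ᵥ ((SimpleGraph.pathGraph n).lapMatrix ℝ).mulVec x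
        = (∑ i, ∑ j, if (SimpleGraph.pathGraph n).Adj i j then (x i - x j) ^ 2 else 0) / 2 := by
      rw [← Matrix.toLinearMap₂'_apply', SimpleGraph.lapMatrix_toLinearMap₂']
    rw [hmu, hL]
    have step1 : (∑ i, ∑ j, if (SimpleGraph.pathGraph n).Adj i j then (x i - x j) ^ 2 else 0)
        = ∑ i, ∑ j, if (SimpleGraph.pathGraph n).Adj i j then (y i + y j) ^ 2 else 0 := by
      refine Finset.sum_congr rfl fun i _ => Finset.sum_congr rfl fun j _ => ?_
      by_cases h : (SimpleGraph.pathGraph n).Adj i j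
      · simp only [if_pos h]; exact hadj_sq i j h
      · simp [h]
    rw [step1]
    have step2 : (∑ i, ∑ j, if (SimpleGraph.pathGraph n).Adj i j then (y i + y j) ^ 2 else 0)
        ≤ ∑ i, ∑ j, if (SimpleGraph.pathGraph n).Adj i j then
            ((W i.val + W j.val) / W i.val * y i ^ 2
              + (W i.val + W j.val) / W j.val * y j ^ 2) else 0 := by
      refine Finset.sum_le_sum fun i _ => Finset.sum_le_sum fun j _ => ?_
      by_cases h : (SimpleGraph.pathGraph n).Adj i j
      · simp only [if_pos h]; exact hbound i j h
      · simp [h]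
    have step3 : (∑ i, ∑ j, if (SimpleGraph.pathGraph n).Adj i j then
            ((W i.val + W j.val) / W i.val * y i ^ 2
              + (W i.val + W j.val) / W j.val * y j ^ 2) else 0)
        = 2 * ∑ i, ∑ j, if (SimpleGraph.pathGraph n).Adj i j then
            (W i.val + W j.val) / W i.val * y i ^ 2 else 0 := by
      have hsplit : ∀ i j : Fin n, (if (SimpleGraph.pathGraph n).Adj i j then
            ((W i.val + W j.val) / W i.val * y i ^ 2
              + (W i.val + W j.val) / W j.val * y j ^ 2) else 0)
          = (if (SimpleGraph.pathGraph n).Adj i j then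
              (W i.val + W j.val) / W i.val * y i ^ 2 else 0)
            + (if (SimpleGraph.pathGraph n).Adj i j then
              (W i.val + W j.val) / W j.val * y j ^ 2 else 0) := by
        intro i j; split_ifs <;> simp
      simp_rw [hsplit, Finset.sum_add_distrib]
      have hswap : (∑ i, ∑ j, if (SimpleGraph.pathGraph n).Adj i j then
            (W i.val + W j.val) / W j.val * y j ^ 2 else 0)
          = ∑ i, ∑ j, if (SimpleGraph.pathGraph n).Adj i j then
            (W i.val + W j.val) / W i.val * y i ^ 2 else 0 := by
        rw [Finset.sum_comm]
        refine Finset.sum_congr rfl fun a _ => Finset.sum_congr rfl fun b _ => ?_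
        by_cases h : (SimpleGraph.pathGraph n).Adj a b
        · rw [if_pos h.symm, if_pos h]; ring
        · rw [if_neg (fun hc => h hc.symm), if_neg h]
      rw [hswap]; ring
    have step4 : ∀ i : Fin n, (∑ j, if (SimpleGraph.pathGraph n).Adj i j then
          (W i.val + W j.val) / W i.val * y i ^ 2 else 0)
        = (2 + 2 * Real.cos (2 * s)) * y i ^ 2 := by
      intro i
      have hinner : (∑ j, if (SimpleGraph.pathGraph n).Adj i j then
            (W i.val + W j.val) / W i.val * y i ^ 2 else 0)
          = y i ^ 2 / W i.val * ∑ j, (if (SimpleGraph.pathGraph n).Adj i j then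
              (W i.val + W j.val) else 0) := by
        rw [Finset.mul_sum]
        refine Finset.sum_congr rfl fun j _ => ?_
        split_ifs
        · ring
        · exact (mul_zero _).symm
      rw [hinner, keyF i]
      have hwi := (hW_pos i.val i.isLt).ne'
      field_simp
    calc (∑ i, ∑ j, if (SimpleGraph.pathGraph n).Adj i j then (y i + y j) ^ 2 else 0) / 2
        ≤ (∑ i, ∑ j, if (SimpleGraph.pathGraph n).Adj i j then
            ((W i.val + W j.val) / W i.val * y i ^ 2
              + (W i.val + W j.val) / W j.val * y j ^ 2) else 0) / 2 := by linarith [step2]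
      _ = ∑ i, ∑ j, if (SimpleGraph.pathGraph n).Adj i j then
            (W i.val + W j.val) / W i.val * y i ^ 2 else 0 := by rw [step3]; ring
      _ = ∑ i, (2 + 2 * Real.cos (2 * s)) * y i ^ 2 :=
          Finset.sum_congr rfl fun i _ => step4 i
      _ = (2 + 2 * Real.cos (2 * s)) * ∑ i, x i ^ 2 := by
          simp_rw [hyx]
          rw [← Finset.mul_sum]
  · rw [hmu]
    have h2s_eq : 2 * s = π / n := by
      rw [hs]; field_simp
    have h2s_le : 2 * s ≤ π := by
      rw [h2s_eq]
      exact div_le_self Real.pi_pos.le (by linarith)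
    have h2s_pos : 0 < 2 * s := by linarith
    have hcos : Real.cos (2 * s) < 1 := by
      have := Real.cos_lt_cos_of_nonneg_of_le_pi (le_refl 0) h2s_le h2s_pos
      simpa using this
    linarith
end

section
/- Let τ > 0, m ≥ 1, and let λ : Fin m → ℝ satisfy λ_i > 0 for all i; write λ_max = max_i λ_i and λ_min = min_i λ_i. Define g(κ) = Σ_i f_τ(κ·λ_i) for κ ∈ (0, π/(2·τ·λ_max)), where f_τ(x) = cos(τx)/(2x(1 − sin(τx))). Then there exists a unique κ* ∈ (0, π/(2·τ·λ_max)) such that g(κ*) ≤ g(κ) for all κ in this interval. Moreover κ* lies in the closed interval [z*/(τ·λ_max), z*/(τ·λ_min)], where z* is the unique positive solution of cos(z) = z. -/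
open Real

noncomputable def fOne (y : ℝ) : ℝ := Real.cos y / (2 * y * (1 - Real.sin y))
noncomputable def fOneD (y : ℝ) : ℝ := (y - Real.cos y) / (2 * y ^ 2 * (1 - Real.sin y))
noncomputable def fOneDD (y : ℝ) : ℝ :=
  (y ^ 2 * Real.cos y + 2 * (1 - Real.sin y) * (Real.cos y - y)) /
    (2 * y ^ 3 * (1 - Real.sin y) ^ 2)

lemma sin_lt_one' {y : ℝ} (hy1 : 0 < y) (hy2 : y < π / 2) : Real.sin y < 1 := by
  have h := Real.strictMonoOn_sin
    (Set.mem_Icc.2 ⟨by linarith [Real.pi_pos], le_of_lt hy2⟩)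
    (Set.mem_Icc.2 ⟨by linarith [Real.pi_pos], le_refl (π/2)⟩) hy2
  simpa using h

lemma hasDerivAt_fOne {y : ℝ} (hy1 : 0 < y) (hy2 : y < π / 2) :
    HasDerivAt fOne (fOneD y) y := by
  have hs : Real.sin y < 1 := sin_lt_one' hy1 hy2
  have hs' : (0:ℝ) < 1 - Real.sin y := by linarith
  have hden : 2 * y * (1 - Real.sin y) ≠ 0 := by positivity
  have h2 : HasDerivAt (fun t : ℝ => 2 * t * (1 - Real.sin t))
      (2 * (1 - Real.sin y) + 2 * y * (-Real.cos y)) y := by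
    have := ((hasDerivAt_id y).const_mul 2).fun_mul ((Real.hasDerivAt_sin y).const_sub 1)
    simpa [mul_comm] using this
  have h := (Real.hasDerivAt_cos y).div h2 hden
  refine h.congr_deriv (Eq.symm ?_)
  unfold fOneD
  have pyth := Real.sin_sq_add_cos_sq y
  rw [div_eq_div_iff (by positivity) (by positivity)]
  linear_combination (-(4*y^3*(1 - Real.sin y))) * pyth

lemma hasDerivAt_fOneD {y : ℝ} (hy1 : 0 < y) (hy2 : y < π / 2) :
    HasDerivAt fOneD (fOneDD y) y := by
  have hs : Real.sin y < 1 := sin_lt_one' hy1 hy2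
  have hs' : (0:ℝ) < 1 - Real.sin y := by linarith
  have hden : 2 * y ^ 2 * (1 - Real.sin y) ≠ 0 := by positivity
  have h1 : HasDerivAt (fun t : ℝ => t - Real.cos t) (1 + Real.sin y) y := by
    have := (hasDerivAt_id y).fun_sub (Real.hasDerivAt_cos y)
    simpa using this
  have h2 : HasDerivAt (fun t : ℝ => 2 * t ^ 2 * (1 - Real.sin t))
      (4 * y * (1 - Real.sin y) + 2 * y ^ 2 * (-Real.cos y)) y := by
    have := (((hasDerivAt_pow 2 y).const_mul 2)).fun_mul ((Real.hasDerivAt_sin y).const_sub 1)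
    refine this.congr_deriv ?_
    ring
  have h := h1.div h2 hden
  refine h.congr_deriv (Eq.symm ?_)
  unfold fOneDD
  have pyth := Real.sin_sq_add_cos_sq y
  rw [div_eq_div_iff (by positivity) (by positivity)]
  ring_nf
  linear_combination (4*y^5*(1 - Real.sin y)^2) * pyth

lemma fOneDD_pos {y : ℝ} (hy1 : 0 < y) (hy2 : y < π / 2) : 0 < fOneDD y := by
  have hs : Real.sin y < 1 := sin_lt_one' hy1 hy2
  have hs0 : 0 < Real.sin y := Real.sin_pos_of_pos_of_lt_pi hy1 (by linarith [Real.pi_pos])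
  have hc : 0 < Real.cos y := Real.cos_pos_of_mem_Ioo ⟨by linarith, hy2⟩
  have pyth := Real.sin_sq_add_cos_sq y
  have hnum : 0 < y ^ 2 * Real.cos y + 2 * (1 - Real.sin y) * (Real.cos y - y) := by
    nlinarith [sq_nonneg (2 * Real.cos y - y), mul_pos hc hs0,
      mul_pos (mul_pos hy1 hy1) hc, mul_pos (mul_pos (mul_pos hy1 hy1) hc) hs0,
      sq_nonneg (2 * Real.cos y - y), mul_pos hc (mul_pos hy1 hy1)]
  have hden : (0:ℝ) < 2 * y ^ 3 * (1 - Real.sin y) ^ 2 :=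
    mul_pos (by positivity) (pow_pos (by linarith) 2)
  exact div_pos hnum hden

lemma fOneD_neg {z y : ℝ} (hz : 0 < z) (hzfix : Real.cos z = z) (hy1 : 0 < y) (hy : y < z) :
    fOneD y < 0 := by
  have hz1 : z ≤ 1 := hzfix ▸ Real.cos_le_one z
  have hy2 : y < π / 2 := by nlinarith [Real.pi_gt_three]
  have hs : Real.sin y < 1 := sin_lt_one' hy1 hy2
  have hcc : Real.cos z < Real.cos y := by
    have := Real.strictAntiOn_cos (Set.mem_Icc.2 ⟨le_of_lt hy1, by nlinarith [Real.pi_gt_three]⟩)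
      (Set.mem_Icc.2 ⟨le_of_lt hz, by nlinarith [Real.pi_gt_three]⟩) hy
    exact this
  have hnum : y - Real.cos y < 0 := by rw [hzfix] at hcc; linarith
  have hden : (0:ℝ) < 2 * y ^ 2 * (1 - Real.sin y) :=
    mul_pos (by positivity) (by linarith)
  exact div_neg_of_neg_of_pos hnum hden

lemma fOneD_pos {z y : ℝ} (hz : 0 < z) (hzfix : Real.cos z = z) (hy : z < y) (hy2 : y < π / 2) :
    fOneD y > 0 := by
  have hz1 : z ≤ 1 := hzfix ▸ Real.cos_le_one z
  have hy1 : 0 < y := lt_trans hz hy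
  have hs : Real.sin y < 1 := sin_lt_one' hy1 hy2
  have hcc : Real.cos y < Real.cos z := by
    refine Real.strictAntiOn_cos (Set.mem_Icc.2 ⟨le_of_lt hz, ?_⟩)
      (Set.mem_Icc.2 ⟨le_of_lt hy1, ?_⟩) hy <;> nlinarith [Real.pi_gt_three]
  have hnum : 0 < y - Real.cos y := by rw [hzfix] at hcc; linarith
  have hden : (0:ℝ) < 2 * y ^ 2 * (1 - Real.sin y) :=
    mul_pos (by positivity) (by linarith)
  exact div_pos hnum hden

lemma fOne_pos {y : ℝ} (hy1 : 0 < y) (hy2 : y < π / 2) : 0 < fOne y := by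
  have hs : Real.sin y < 1 := sin_lt_one' hy1 hy2
  have hc : 0 < Real.cos y := Real.cos_pos_of_mem_Ioo ⟨by linarith, hy2⟩
  exact div_pos hc (mul_pos (by positivity) (by linarith))

lemma fOne_lb_left {y : ℝ} (hy1 : 0 < y) (hy3 : y ≤ π / 3) : 1 / (4 * y) ≤ fOne y := by
  have hy2 : y < π / 2 := by nlinarith [Real.pi_pos]
  have hs : Real.sin y < 1 := sin_lt_one' hy1 hy2
  have hs0 : 0 ≤ Real.sin y := Real.sin_nonneg_of_nonneg_of_le_pi (le_of_lt hy1)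
    (by nlinarith [Real.pi_pos])
  have hc : Real.cos (π/3) ≤ Real.cos y := by
    rcases eq_or_lt_of_le hy3 with h | h
    · rw [h]
    · exact le_of_lt (Real.strictAntiOn_cos (Set.mem_Icc.2 ⟨le_of_lt hy1, by linarith [Real.pi_pos]⟩)
        (Set.mem_Icc.2 ⟨by positivity, by linarith [Real.pi_pos]⟩) h)
  rw [Real.cos_pi_div_three] at hc
  unfold fOne
  rw [div_le_div_iff₀ (by positivity) (mul_pos (by positivity) (by linarith))]
  nlinarith [mul_nonneg (le_of_lt hy1) hs0,
    mul_le_mul_of_nonneg_left hc (by linarith : (0:ℝ) ≤ 4*y)]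

lemma fOne_lb_right {y : ℝ} (hy1 : 0 < y) (hy2 : y < π / 2) :
    1 / (π * Real.cos y) ≤ fOne y := by
  have hs : Real.sin y < 1 := sin_lt_one' hy1 hy2
  have hs0 : 0 ≤ Real.sin y := Real.sin_nonneg_of_nonneg_of_le_pi (le_of_lt hy1)
    (by linarith [Real.pi_pos])
  have hc : 0 < Real.cos y := Real.cos_pos_of_mem_Ioo ⟨by linarith, hy2⟩
  have pyth := Real.sin_sq_add_cos_sq y
  -- fOne y = (1 + sin y)/(2 y cos y)
  have key : fOne y = (1 + Real.sin y) / (2 * y * Real.cos y) := by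
    unfold fOne
    rw [div_eq_div_iff (mul_pos (mul_pos two_pos hy1) (by linarith : (0:ℝ) < 1 - Real.sin y)).ne' (by positivity)]
    linear_combination (2*y) * pyth
  rw [key, div_le_div_iff₀ (by positivity) (by positivity)]
  nlinarith [mul_le_mul_of_nonneg_left hs0 (le_of_lt hc)]
section PhiSection

variable {τ : ℝ} {m : ℕ} {lam : Fin m → ℝ} {lamMax : ℝ}

noncomputable def Phi (τ : ℝ) (m : ℕ) (lam : Fin m → ℝ) (κ : ℝ) : ℝ :=
  ∑ i, τ * fOne (τ * lam i * κ)

noncomputable def PhiD (τ : ℝ) (m : ℕ) (lam : Fin m → ℝ) (κ : ℝ) : ℝ :=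
  ∑ i, τ * (fOneD (τ * lam i * κ) * (τ * lam i))

noncomputable def PhiDD (τ : ℝ) (m : ℕ) (lam : Fin m → ℝ) (κ : ℝ) : ℝ :=
  ∑ i, τ * (fOneDD (τ * lam i * κ) * (τ * lam i) * (τ * lam i))

lemma y_mem (hτ : 0 < τ) (hlam : ∀ i, 0 < lam i) (hle : ∀ i, lam i ≤ lamMax)
    {κ : ℝ} (hκ : κ ∈ Set.Ioo 0 (π / (2 * τ * lamMax))) (i : Fin m) :
    0 < τ * lam i * κ ∧ τ * lam i * κ < π / 2 := by
  have hlmax : 0 < lamMax := lt_of_lt_of_le (hlam i) (hle i)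
  constructor
  · exact mul_pos (mul_pos hτ (hlam i)) hκ.1
  · have h1 : τ * lam i * κ < τ * lam i * (π / (2 * τ * lamMax)) :=
      mul_lt_mul_of_pos_left hκ.2 (mul_pos hτ (hlam i))
    have h2 : τ * lam i * (π / (2 * τ * lamMax)) = (lam i / lamMax) * (π / 2) := by
      field_simp
    have h3 : (lam i / lamMax) * (π / 2) ≤ 1 * (π / 2) := by
      apply mul_le_mul_of_nonneg_right _ (by positivity)
      rw [div_le_one hlmax]; exact hle i
    rw [h2] at h1; linarith
variable (τ m lam) in
lemma phi_hasDeriv (hτ : 0 < τ) (hlam : ∀ i, 0 < lam i) (hle : ∀ i, lam i ≤ lamMax)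
    {κ : ℝ} (hκ : κ ∈ Set.Ioo 0 (π / (2 * τ * lamMax))) :
    HasDerivAt (Phi τ m lam) (PhiD τ m lam κ) κ := by
  apply HasDerivAt.fun_sum
  intro i _
  have hy := y_mem hτ hlam hle hκ i
  have hinner : HasDerivAt (fun x : ℝ => τ * lam i * x) (τ * lam i) κ := by
    simpa using (hasDerivAt_id κ).const_mul (τ * lam i)
  have := ((hasDerivAt_fOne hy.1 hy.2).comp κ hinner).const_mul τ
  simpa [Function.comp] using this

variable (τ m lam) in
lemma phiD_hasDeriv (hτ : 0 < τ) (hlam : ∀ i, 0 < lam i) (hle : ∀ i, lam i ≤ lamMax)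
    {κ : ℝ} (hκ : κ ∈ Set.Ioo 0 (π / (2 * τ * lamMax))) :
    HasDerivAt (PhiD τ m lam) (PhiDD τ m lam κ) κ := by
  apply HasDerivAt.fun_sum
  intro i _
  have hy := y_mem hτ hlam hle hκ i
  have hinner : HasDerivAt (fun x : ℝ => τ * lam i * x) (τ * lam i) κ := by
    simpa using (hasDerivAt_id κ).const_mul (τ * lam i)
  have h := (((hasDerivAt_fOneD hy.1 hy.2).comp κ hinner).mul_const (τ * lam i)).const_mul τ
  exact h

end PhiSection

section PhiSection2
variable {τ : ℝ} {m : ℕ} {lam : Fin m → ℝ} {lamMax lamMin z : ℝ}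

lemma phi_pos (hτ : 0 < τ) (hlam : ∀ i, 0 < lam i) (hle : ∀ i, lam i ≤ lamMax)
    (hm : 1 ≤ m) {κ : ℝ} (hκ : κ ∈ Set.Ioo 0 (π / (2 * τ * lamMax))) :
    0 < Phi τ m lam κ := by
  have : Nonempty (Fin m) := ⟨⟨0, hm⟩⟩
  apply Finset.sum_pos _ Finset.univ_nonempty
  intro i _
  have hy := y_mem hτ hlam hle hκ i
  exact mul_pos hτ (fOne_pos hy.1 hy.2)

lemma phiD_neg (hτ : 0 < τ) (hlam : ∀ i, 0 < lam i) (hle : ∀ i, lam i ≤ lamMax)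
    (hm : 1 ≤ m) (hz : 0 < z) (hzfix : Real.cos z = z)
    {κ : ℝ} (hκ1 : 0 < κ) (hκ2 : κ < z / (τ * lamMax)) :
    PhiD τ m lam κ < 0 := by
  have : Nonempty (Fin m) := ⟨⟨0, hm⟩⟩
  have hlmax : 0 < lamMax := lt_of_lt_of_le (hlam ⟨0, hm⟩) (hle ⟨0, hm⟩)
  have h : ∀ i ∈ Finset.univ, τ * (fOneD (τ * lam i * κ) * (τ * lam i)) < (fun _ : Fin m => (0:ℝ)) i := by
    intro i _
    have hy1 : 0 < τ * lam i * κ := mul_pos (mul_pos hτ (hlam i)) hκ1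
    have hyz : τ * lam i * κ < z := by
      have h1 : τ * lam i * κ ≤ τ * lamMax * κ := by
        apply mul_le_mul_of_nonneg_right _ (le_of_lt hκ1)
        exact mul_le_mul_of_nonneg_left (hle i) (le_of_lt hτ)
      have h2 : τ * lamMax * κ < τ * lamMax * (z / (τ * lamMax)) :=
        mul_lt_mul_of_pos_left hκ2 (mul_pos hτ hlmax)
      have h3 : τ * lamMax * (z / (τ * lamMax)) = z := by field_simp
      simp only [h3] at h2; linarith
    have := fOneD_neg hz hzfix hy1 hyz
    have hc : 0 < τ * lam i := mul_pos hτ (hlam i)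
    exact mul_neg_of_pos_of_neg hτ (mul_neg_of_neg_of_pos this hc)
  have := Finset.sum_lt_sum_of_nonempty Finset.univ_nonempty h
  simpa [PhiD] using this

lemma phiD_pos (hτ : 0 < τ) (hlam : ∀ i, 0 < lam i) (hle : ∀ i, lam i ≤ lamMax)
    (hge : ∀ i, lamMin ≤ lam i) (hlmin : 0 < lamMin)
    (hm : 1 ≤ m) (hz : 0 < z) (hzfix : Real.cos z = z)
    {κ : ℝ} (hκ : κ ∈ Set.Ioo 0 (π / (2 * τ * lamMax))) (hκ2 : z / (τ * lamMin) < κ) :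
    0 < PhiD τ m lam κ := by
  have : Nonempty (Fin m) := ⟨⟨0, hm⟩⟩
  apply Finset.sum_pos _ Finset.univ_nonempty
  intro i _
  have hy := y_mem hτ hlam hle hκ i
  have hyz : z < τ * lam i * κ := by
    have h1 : τ * lamMin * κ ≤ τ * lam i * κ := by
      apply mul_le_mul_of_nonneg_right _ (le_of_lt hκ.1)
      exact mul_le_mul_of_nonneg_left (hge i) (le_of_lt hτ)
    have h2 : τ * lamMin * (z / (τ * lamMin)) < τ * lamMin * κ :=
      mul_lt_mul_of_pos_left hκ2 (mul_pos hτ hlmin)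
    have h3 : τ * lamMin * (z / (τ * lamMin)) = z := by field_simp
    simp only [h3] at h2; linarith
  have := fOneD_pos hz hzfix hyz hy.2
  exact mul_pos hτ (mul_pos this (mul_pos hτ (hlam i)))

lemma phiDD_pos (hτ : 0 < τ) (hlam : ∀ i, 0 < lam i) (hle : ∀ i, lam i ≤ lamMax)
    (hm : 1 ≤ m) {κ : ℝ} (hκ : κ ∈ Set.Ioo 0 (π / (2 * τ * lamMax))) :
    0 < PhiDD τ m lam κ := by
  have : Nonempty (Fin m) := ⟨⟨0, hm⟩⟩
  apply Finset.sum_pos _ Finset.univ_nonempty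
  intro i _
  have hy := y_mem hτ hlam hle hκ i
  exact mul_pos hτ (mul_pos (mul_pos (fOneDD_pos hy.1 hy.2) (mul_pos hτ (hlam i))) (mul_pos hτ (hlam i)))

end PhiSection2

section PhiSection3
variable {τ : ℝ} {m : ℕ} {lam : Fin m → ℝ} {lamMax lamMin z : ℝ}

lemma phi_contOn (hτ : 0 < τ) (hlam : ∀ i, 0 < lam i) (hle : ∀ i, lam i ≤ lamMax) :
    ContinuousOn (Phi τ m lam) (Set.Ioo 0 (π / (2 * τ * lamMax))) :=
  fun κ hκ => (phi_hasDeriv τ m lam hτ hlam hle hκ).continuousAt.continuousWithinAt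

lemma phi_strictConvex (hτ : 0 < τ) (hlam : ∀ i, 0 < lam i) (hle : ∀ i, lam i ≤ lamMax)
    (hm : 1 ≤ m) :
    StrictConvexOn ℝ (Set.Ioo 0 (π / (2 * τ * lamMax))) (Phi τ m lam) := by
  apply strictConvexOn_of_deriv2_pos (convex_Ioo _ _) (phi_contOn hτ hlam hle)
  intro x hx
  rw [interior_Ioo] at hx
  have h1 : deriv (Phi τ m lam) =ᶠ[nhds x] PhiD τ m lam := by
    filter_upwards [isOpen_Ioo.mem_nhds hx] with y hy
    exact (phi_hasDeriv τ m lam hτ hlam hle hy).deriv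
  have h2 : deriv^[2] (Phi τ m lam) x = deriv (deriv (Phi τ m lam)) x := rfl
  rw [h2, h1.deriv_eq, (phiD_hasDeriv τ m lam hτ hlam hle hx).deriv]
  exact phiDD_pos hτ hlam hle hm hx

lemma phi_anti (hτ : 0 < τ) (hlam : ∀ i, 0 < lam i) (hle : ∀ i, lam i ≤ lamMax)
    (hlmax : 0 < lamMax) (hm : 1 ≤ m) (hz : 0 < z) (hzfix : Real.cos z = z) :
    StrictAntiOn (Phi τ m lam) (Set.Ioc 0 (z / (τ * lamMax))) := by
  have hz2 : z < π / 2 := by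
    have : z ≤ 1 := hzfix ▸ Real.cos_le_one z
    nlinarith [Real.pi_gt_three]
  have hLE : z / (τ * lamMax) < π / (2 * τ * lamMax) := by
    rw [div_lt_div_iff₀ (by positivity) (by positivity)]
    nlinarith [mul_pos hτ hlmax]
  apply strictAntiOn_of_deriv_neg (convex_Ioc _ _)
  · apply (phi_contOn hτ hlam hle).mono
    intro x hx
    exact ⟨hx.1, lt_of_le_of_lt hx.2 hLE⟩
  · intro x hx
    rw [interior_Ioc] at hx
    have hx' : x ∈ Set.Ioo 0 (π / (2 * τ * lamMax)) := ⟨hx.1, lt_trans hx.2 hLE⟩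
    rw [(phi_hasDeriv τ m lam hτ hlam hle hx').deriv]
    exact phiD_neg hτ hlam hle hm hz hzfix hx.1 hx.2

lemma phi_mono (hτ : 0 < τ) (hlam : ∀ i, 0 < lam i) (hle : ∀ i, lam i ≤ lamMax)
    (hge : ∀ i, lamMin ≤ lam i) (hlmin : 0 < lamMin) (hm : 1 ≤ m)
    (hz : 0 < z) (hzfix : Real.cos z = z) :
    StrictMonoOn (Phi τ m lam) (Set.Ico (z / (τ * lamMin)) (π / (2 * τ * lamMax))) := by
  have hU : 0 < z / (τ * lamMin) := by positivity
  apply strictMonoOn_of_deriv_pos (convex_Ico _ _)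
  · apply (phi_contOn hτ hlam hle).mono
    intro x hx
    exact ⟨lt_of_lt_of_le hU hx.1, hx.2⟩
  · intro x hx
    rw [interior_Ico] at hx
    have hx' : x ∈ Set.Ioo 0 (π / (2 * τ * lamMax)) := ⟨lt_trans hU hx.1, hx.2⟩
    rw [(phi_hasDeriv τ m lam hτ hlam hle hx').deriv]
    exact phiD_pos hτ hlam hle hge hlmin hm hz hzfix hx' hx.1

lemma phi_lb_left (hτ : 0 < τ) (hlam : ∀ i, 0 < lam i) (hle : ∀ i, lam i ≤ lamMax)
    (imax : Fin m) (hmaxeq : lam imax = lamMax)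
    {κ : ℝ} (hκ : κ ∈ Set.Ioo 0 (π / (2 * τ * lamMax))) (hκ3 : τ * lamMax * κ ≤ π / 3) :
    1 / (4 * lamMax * κ) ≤ Phi τ m lam κ := by
  have hlmax : 0 < lamMax := hmaxeq ▸ hlam imax
  have hy1 : 0 < τ * lamMax * κ := mul_pos (mul_pos hτ hlmax) hκ.1
  have hlb := fOne_lb_left hy1 hκ3
  have hsingle : τ * fOne (τ * lam imax * κ) ≤ Phi τ m lam κ := by
    apply Finset.single_le_sum (f := fun i => τ * fOne (τ * lam i * κ)) _ (Finset.mem_univ imax)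
    intro i _
    have hy := y_mem hτ hlam hle hκ i
    exact le_of_lt (mul_pos hτ (fOne_pos hy.1 hy.2))
  calc 1 / (4 * lamMax * κ) = τ * (1 / (4 * (τ * lamMax * κ))) := by
        rw [mul_one_div, div_eq_div_iff (mul_pos (mul_pos (by norm_num : (0:ℝ)<4) hlmax) hκ.1).ne'
          (mul_pos (by norm_num : (0:ℝ) < 4) hy1).ne']
        ring
    _ ≤ τ * fOne (τ * lamMax * κ) := mul_le_mul_of_nonneg_left hlb (le_of_lt hτ)
    _ = τ * fOne (τ * lam imax * κ) := by rw [hmaxeq]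
    _ ≤ Phi τ m lam κ := hsingle

lemma phi_lb_right (hτ : 0 < τ) (hlam : ∀ i, 0 < lam i) (hle : ∀ i, lam i ≤ lamMax)
    (imax : Fin m) (hmaxeq : lam imax = lamMax)
    {κ : ℝ} (hκ : κ ∈ Set.Ioo 0 (π / (2 * τ * lamMax))) :
    1 / (π * lamMax * (π / (2 * τ * lamMax) - κ)) ≤ Phi τ m lam κ := by
  have hlmax : 0 < lamMax := hmaxeq ▸ hlam imax
  have hy := y_mem hτ hlam hle hκ imax
  rw [hmaxeq] at hy
  have hc : 0 < Real.cos (τ * lamMax * κ) := Real.cos_pos_of_mem_Ioo ⟨by linarith, hy.2⟩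
  have hlb := fOne_lb_right hy.1 hy.2
  have hsin : Real.cos (τ * lamMax * κ) < π / 2 - τ * lamMax * κ := by
    have h1 : Real.sin (π / 2 - τ * lamMax * κ) < π / 2 - τ * lamMax * κ :=
      Real.sin_lt (by linarith)
    rwa [Real.sin_pi_div_two_sub] at h1
  have hkey : π / 2 - τ * lamMax * κ = τ * lamMax * (π / (2 * τ * lamMax) - κ) := by
    field_simp
  have hEκ : 0 < π / (2 * τ * lamMax) - κ := by linarith [hκ.2]
  have hsingle : τ * fOne (τ * lam imax * κ) ≤ Phi τ m lam κ := by
    apply Finset.single_le_sum (f := fun i => τ * fOne (τ * lam i * κ)) _ (Finset.mem_univ imax)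
    intro i _
    have hyi := y_mem hτ hlam hle hκ i
    exact le_of_lt (mul_pos hτ (fOne_pos hyi.1 hyi.2))
  have step : 1 / (π * lamMax * (π / (2 * τ * lamMax) - κ)) ≤ τ * (1 / (π * Real.cos (τ * lamMax * κ))) := by
    rw [hkey] at hsin
    rw [div_le_iff₀ (by positivity)]
    rw [mul_one_div, div_mul_eq_mul_div, le_div_iff₀ (by positivity)]
    have : Real.cos (τ * lamMax * κ) ≤ τ * lamMax * (π / (2 * τ * lamMax) - κ) := le_of_lt hsin
    nlinarith [Real.pi_pos, mul_pos (mul_pos hτ hlmax) hEκ]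
  calc 1 / (π * lamMax * (π / (2 * τ * lamMax) - κ)) ≤ τ * (1 / (π * Real.cos (τ * lamMax * κ))) := step
    _ ≤ τ * fOne (τ * lamMax * κ) := mul_le_mul_of_nonneg_left hlb (le_of_lt hτ)
    _ = τ * fOne (τ * lam imax * κ) := by rw [hmaxeq]
    _ ≤ Phi τ m lam κ := hsingle

end PhiSection3

section PhiSection4
variable {τ : ℝ} {m : ℕ} {lam : Fin m → ℝ} {lamMax lamMin z : ℝ}

lemma phi_exists_min (hτ : 0 < τ) (hlam : ∀ i, 0 < lam i) (hle : ∀ i, lam i ≤ lamMax)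
    (hlmax : 0 < lamMax) (hm : 1 ≤ m) (imax : Fin m) (hmaxeq : lam imax = lamMax)
    (hz : 0 < z) (hzfix : Real.cos z = z) :
    ∃ κs ∈ Set.Ioo (0:ℝ) (π / (2 * τ * lamMax)),
      ∀ κ' ∈ Set.Ioo (0:ℝ) (π / (2 * τ * lamMax)), Phi τ m lam κs ≤ Phi τ m lam κ' := by
  set E := π / (2 * τ * lamMax) with hEdef
  set L := z / (τ * lamMax) with hLdef
  have hz2 : z < π / 2 := by
    have : z ≤ 1 := hzfix ▸ Real.cos_le_one z
    nlinarith [Real.pi_gt_three]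
  have hEpos : 0 < E := by positivity
  have hLpos : 0 < L := by positivity
  have hLE : L < E := by
    rw [hLdef, hEdef, div_lt_div_iff₀ (by positivity) (by positivity)]
    nlinarith [mul_pos hτ hlmax]
  have hLmem : L ∈ Set.Ioo (0:ℝ) E := ⟨hLpos, hLE⟩
  set C := Phi τ m lam L with hCdef
  have hC : 0 < C := phi_pos hτ hlam hle hm hLmem
  set a := min (L / 2) (min (1 / (4 * lamMax * (C + 1))) (π / (3 * τ * lamMax))) with hadef
  have ha0 : 0 < a := by
    apply lt_min (by positivity) (lt_min (by positivity) (by positivity))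
  have haL : a < L := lt_of_le_of_lt (min_le_left _ _) (by linarith)
  have hblow0 : ∀ κ ∈ Set.Ioo (0:ℝ) E, κ ≤ a → C < Phi τ m lam κ := by
    intro κ hκ hκa
    have h1 : κ ≤ π / (3 * τ * lamMax) :=
      le_trans hκa (le_trans (min_le_right _ _) (min_le_right _ _))
    have h2 : κ ≤ 1 / (4 * lamMax * (C + 1)) :=
      le_trans hκa (le_trans (min_le_right _ _) (min_le_left _ _))
    have h3 : τ * lamMax * κ ≤ π / 3 := by
      rw [le_div_iff₀ (by positivity)] at h1 ⊢
      nlinarith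
    have h4 := phi_lb_left hτ hlam hle imax hmaxeq hκ h3
    have h5 : C + 1 ≤ 1 / (4 * lamMax * κ) := by
      rw [le_div_iff₀ (mul_pos (mul_pos (by norm_num : (0:ℝ)<4) hlmax) hκ.1)]
      rw [le_div_iff₀ (by positivity)] at h2
      nlinarith
    linarith
  set b := E - min ((E - L) / 2) (1 / (π * lamMax * (C + 1))) with hbdef
  have hbE : b < E := by
    have : 0 < min ((E - L) / 2) (1 / (π * lamMax * (C + 1))) :=
      lt_min (by linarith) (by positivity)
    rw [hbdef]; linarith
  have hLb : L < b := by
    have : min ((E - L) / 2) (1 / (π * lamMax * (C + 1))) ≤ (E - L) / 2 := min_le_left _ _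
    rw [hbdef]; linarith
  have hblowE : ∀ κ ∈ Set.Ioo (0:ℝ) E, b ≤ κ → C < Phi τ m lam κ := by
    intro κ hκ hκb
    have h4 := phi_lb_right hτ hlam hle imax hmaxeq hκ
    have hEκ : 0 < E - κ := by linarith [hκ.2]
    have h2 : E - κ ≤ 1 / (π * lamMax * (C + 1)) := by
      have : min ((E - L) / 2) (1 / (π * lamMax * (C + 1))) ≤ 1 / (π * lamMax * (C + 1)) :=
        min_le_right _ _
      rw [hbdef] at hκb; linarith
    have h5 : C + 1 ≤ 1 / (π * lamMax * (E - κ)) := by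
      rw [le_div_iff₀ (mul_pos (mul_pos Real.pi_pos hlmax) hEκ)]
      rw [le_div_iff₀ (by positivity)] at h2
      nlinarith
    rw [← hEdef] at h4
    linarith
  have hKsub : Set.Icc a b ⊆ Set.Ioo (0:ℝ) E := by
    intro x hx
    exact ⟨lt_of_lt_of_le ha0 hx.1, lt_of_le_of_lt hx.2 hbE⟩
  obtain ⟨κs, hκsK, hks⟩ := isCompact_Icc.exists_isMinOn
    ⟨L, Set.mem_Icc.2 ⟨le_of_lt haL, le_of_lt hLb⟩⟩
    (((phi_contOn hτ hlam hle)).mono hKsub)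
  have hksmin := isMinOn_iff.mp hks
  refine ⟨κs, hKsub hκsK, ?_⟩
  intro κ' hκ'
  have hκsC : Phi τ m lam κs ≤ C :=
    hksmin L (Set.mem_Icc.2 ⟨le_of_lt haL, le_of_lt hLb⟩)
  rcases le_or_gt κ' a with h | h
  · exact le_of_lt (lt_of_le_of_lt hκsC (hblow0 κ' hκ' h))
  · rcases le_or_gt κ' b with h2 | h2
    · exact hksmin κ' (Set.mem_Icc.2 ⟨le_of_lt h, h2⟩)
    · exact le_of_lt (lt_of_le_of_lt hκsC (hblowE κ' hκ' (le_of_lt h2)))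

end PhiSection4

/-- Optimal uniform rescaling of coupling weights: for `τ > 0` and positive
eigenvalues `λᵢ` with maximum `λmax` and minimum `λmin`, the function
`g(κ) = Σᵢ f_τ(κλᵢ)` (with `f_τ(x) = cos(τx)/(2x(1 − sin(τx)))`) has a unique
minimizer `κ*` on `(0, π/(2τλmax))`, and every such minimizer lies in
`[z*/(τλmax), z*/(τλmin)]`, where `z*` is the unique positive solution of
`cos z = z`. -/
theorem optimal_weight_scaling (τ : ℝ) (hτ : 0 < τ) (m : ℕ) (hm : 1 ≤ m)
    (lam : Fin m → ℝ) (hlam : ∀ i, 0 < lam i)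
    (lamMax lamMin : ℝ)
    (hmax : IsGreatest (Set.range lam) lamMax)
    (hmin : IsLeast (Set.range lam) lamMin)
    (z : ℝ) (hz : 0 < z) (hzfix : Real.cos z = z) :
    (∃! κ : ℝ, κ ∈ Set.Ioo 0 (Real.pi / (2 * τ * lamMax)) ∧
        ∀ κ' ∈ Set.Ioo (0 : ℝ) (Real.pi / (2 * τ * lamMax)),
          ∑ i, Real.cos (τ * (κ * lam i)) /
              (2 * (κ * lam i) * (1 - Real.sin (τ * (κ * lam i)))) ≤
            ∑ i, Real.cos (τ * (κ' * lam i)) /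
              (2 * (κ' * lam i) * (1 - Real.sin (τ * (κ' * lam i))))) ∧
      (∀ κ : ℝ, κ ∈ Set.Ioo 0 (Real.pi / (2 * τ * lamMax)) →
        (∀ κ' ∈ Set.Ioo (0 : ℝ) (Real.pi / (2 * τ * lamMax)),
          ∑ i, Real.cos (τ * (κ * lam i)) /
              (2 * (κ * lam i) * (1 - Real.sin (τ * (κ * lam i)))) ≤
            ∑ i, Real.cos (τ * (κ' * lam i)) /
              (2 * (κ' * lam i) * (1 - Real.sin (τ * (κ' * lam i))))) →
        κ ∈ Set.Icc (z / (τ * lamMax)) (z / (τ * lamMin))) := by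
  obtain ⟨imax, hmaxeq⟩ := hmax.1
  obtain ⟨imin, hmineq⟩ := hmin.1
  have hle : ∀ i, lam i ≤ lamMax := fun i => hmax.2 ⟨i, rfl⟩
  have hge : ∀ i, lamMin ≤ lam i := fun i => hmin.2 ⟨i, rfl⟩
  have hlmax : 0 < lamMax := hmaxeq ▸ hlam imax
  have hlmin : 0 < lamMin := hmineq ▸ hlam imin
  have hsum : ∀ κ : ℝ,
      (∑ i, Real.cos (τ * (κ * lam i)) /
        (2 * (κ * lam i) * (1 - Real.sin (τ * (κ * lam i))))) = Phi τ m lam κ := by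
    intro κ
    unfold Phi
    apply Finset.sum_congr rfl
    intro i _
    have harg : τ * (κ * lam i) = τ * lam i * κ := by ring
    rw [harg]
    unfold fOne
    rw [show 2 * (τ * lam i * κ) * (1 - Real.sin (τ * lam i * κ)) =
        τ * (2 * (κ * lam i) * (1 - Real.sin (τ * lam i * κ))) by ring]
    rw [mul_div_assoc', mul_div_mul_left _ _ (ne_of_gt hτ)]
  simp only [hsum]
  constructor
  · -- existence and uniqueness
    obtain ⟨κs, hκs, hksmin⟩ := phi_exists_min hτ hlam hle hlmax hm imax hmaxeq hz hzfix
    refine ⟨κs, ⟨hκs, hksmin⟩, ?_⟩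
    rintro y ⟨hy, hymin⟩
    by_contra hne
    have hv1 : Phi τ m lam y ≤ Phi τ m lam κs := hymin κs hκs
    have hv2 : Phi τ m lam κs ≤ Phi τ m lam y := hksmin y hy
    have hv : Phi τ m lam y = Phi τ m lam κs := le_antisymm hv1 hv2
    have hconv := phi_strictConvex hτ hlam hle hm (lamMax := lamMax)
    have hmid := hconv.2 hy hκs hne (by norm_num : (0:ℝ) < 1/2) (by norm_num : (0:ℝ) < 1/2)
      (by norm_num)
    have hmidmem : (1/2 : ℝ) • y + (1/2 : ℝ) • κs ∈ Set.Ioo (0:ℝ) (π / (2 * τ * lamMax)) := by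
      simp only [smul_eq_mul]
      constructor
      · nlinarith [hy.1, hκs.1]
      · nlinarith [hy.2, hκs.2]
    have := hymin _ hmidmem
    rw [hv] at hmid
    simp only [smul_eq_mul] at hmid this
    nlinarith [hmid, this, hv]
  · -- localization
    intro κ hκ hκmin
    constructor
    · by_contra hcon
      push_neg at hcon
      have hanti := phi_anti hτ hlam hle hlmax hm hz hzfix (lamMax := lamMax)
      have hz2 : z < π / 2 := by
        have : z ≤ 1 := hzfix ▸ Real.cos_le_one z
        nlinarith [Real.pi_gt_three]
      have hLE : z / (τ * lamMax) < π / (2 * τ * lamMax) := by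
        rw [div_lt_div_iff₀ (by positivity) (by positivity)]
        nlinarith [mul_pos hτ hlmax]
      have hLmem : z / (τ * lamMax) ∈ Set.Ioo (0:ℝ) (π / (2 * τ * lamMax)) :=
        ⟨by positivity, hLE⟩
      have h1 : Phi τ m lam (z / (τ * lamMax)) < Phi τ m lam κ :=
        hanti (Set.mem_Ioc.2 ⟨hκ.1, le_of_lt hcon⟩)
          (Set.mem_Ioc.2 ⟨by positivity, le_refl _⟩) hcon
      have h2 := hκmin _ hLmem
      linarith
    · by_contra hcon
      push_neg at hcon
      have hmono := phi_mono hτ hlam hle hge hlmin hm hz hzfix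
      have hUmem : z / (τ * lamMin) ∈ Set.Ioo (0:ℝ) (π / (2 * τ * lamMax)) :=
        ⟨by positivity, lt_trans hcon hκ.2⟩
      have h1 : Phi τ m lam (z / (τ * lamMin)) < Phi τ m lam κ :=
        hmono (Set.mem_Ico.2 ⟨le_refl _, hUmem.2⟩)
          (Set.mem_Ico.2 ⟨le_of_lt hcon, hκ.2⟩) hcon
      have h2 := hκmin _ hUmem
      linarith
end
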